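/- The generating function for the counts f(t) of partitions in DS(t) satisfies Σ_{t≥0} f(t−1) x^t = 1/(1 − x − x^3), where f(−1) = f(0) = 1 and f(t) is the number of self-conjugate partitions in DS(t) for t ≥ 1. -/

import Mathlib

/-- An integer partition, given by its (weakly decreasing, eventually zero)
sequence of parts, indexed from `0`. -/
structure IntPartition where
  parts : ℕ → ℕ
  antitone : ∀ i j, i ≤ j → parts j ≤ parts i
  finite : ∃ N, ∀ i, N ≤ i → parts i = 0

namespace IntPartition

/-- The size of a partition: the sum of its parts. -/
noncomputable def size (lam : IntPartition) : ℕ := ∑ᶠ i, lam.parts i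

/-- The parts of the conjugate partition: `conjParts lam j` is the number of
rows `i` with `lam.parts i > j` (rows and columns are `0`-indexed). -/
noncomputable def conjParts (lam : IntPartition) (j : ℕ) : ℕ :=
  Nat.card {i : ℕ | j < lam.parts i}

/-- A partition is self-conjugate if it equals its conjugate. -/
def IsSelfConjugate (lam : IntPartition) : Prop :=
  ∀ j, lam.conjParts j = lam.parts j

/-- `(i, j)` (both `0`-indexed) is a cell of the Young diagram of `lam`. -/
def IsCell (lam : IntPartition) (i j : ℕ) : Prop := j < lam.parts i

/-- The hook length of the cell `(i, j)` (both `0`-indexed): the number of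
cells directly to the right, plus the number directly below, plus one. -/
noncomputable def hook (lam : IntPartition) (i j : ℕ) : ℕ :=
  (lam.parts i - j) + (lam.conjParts j - i) - 1

/-- A partition is a `t`-core if no hook length is divisible by `t`. -/
def IsCore (lam : IntPartition) (t : ℕ) : Prop :=
  ∀ i j, lam.IsCell i j → ¬ (t ∣ lam.hook i j)

/-- The size of the Durfee square: the largest `k` such that the partition has
at least `k` parts of size at least `k`. -/
noncomputable def durfee (lam : IntPartition) : ℕ :=
  Nat.card {i : ℕ | i < lam.parts i}

/-- A partition has distinct parts if its (nonzero) parts are pairwise different. -/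
def DistinctParts (lam : IntPartition) : Prop :=
  ∀ i j, lam.parts i ≠ 0 → lam.parts j ≠ 0 → i ≠ j → lam.parts i ≠ lam.parts j

/-- The set of main diagonal hook lengths of `lam`. -/
noncomputable def MD (lam : IntPartition) : Set ℕ :=
  {h | ∃ i < lam.durfee, lam.hook i i = h}

/-- `lam ∈ DS(t)`: `lam` is a self-conjugate `(t, t+1)`-core partition whose
first `durfee lam` parts are pairwise distinct. -/
def InDS (lam : IntPartition) (t : ℕ) : Prop :=
  lam.IsSelfConjugate ∧ lam.IsCore t ∧ lam.IsCore (t + 1) ∧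
    ∀ i j, i < lam.durfee → j < lam.durfee → i ≠ j → lam.parts i ≠ lam.parts j

end IntPartition

/-- `fDS t` is the number of partitions in `DS(t)`. -/
noncomputable def fDS (t : ℕ) : ℕ := Nat.card {lam : IntPartition // lam.InDS t}

/-!
Write `a_i = λ_i - i` for the rows `i` of the Durfee square. A self-conjugate partition is
determined by the set `A` of these numbers, which can be any finite set of positive integers,
and its diagonal hooks are the `2 a - 1`, `a ∈ A`. For cells in the square the hook length is
`a_i + a_j - 1`; every other hook is shorter than `λ_0`, and all hooks are shorter than `2 λ_0`.
Hence for `s ≥ λ_0` the partition is an `s`-core iff no `a_i + a_j` equals `s + 1`, and equal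
parts in the square are adjacent values in `A`. A hook-counting argument in the first row shows
that `λ ∈ DS(t)` forces `λ_0 ≤ t`, so `f(t)` counts the sets `A ⊆ [1, t]` without two adjacent
elements and without two (possibly equal) elements summing to `t + 1` or `t + 2`. Splitting by
whether `1 ∈ A` and reflecting `A` gives `f(t) = f(t - 1) + f(t - 3)`.
-/

open Finset

theorem Set.Finite.mem_iff_lt_natCard_of_isLowerSet {S : Set ℕ} (hfin : S.Finite)
    (hS : IsLowerSet S) {i : ℕ} : i ∈ S ↔ i < Nat.card S := by
  obtain hS | ⟨n, rfl⟩ := hS.eq_univ_or_Iio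
  · exact absurd (hS ▸ hfin) Set.infinite_univ
  · simp

namespace Finset

/-- The `i`-th largest element of `A`, counting from `0` (junk value `0` when `#A ≤ i`). -/
noncomputable def nthLargest (A : Finset ℕ) (i : ℕ) : ℕ :=
  if h : i < #A then A.orderEmbOfFin rfl (Fin.rev ⟨i, h⟩) else 0

variable {A : Finset ℕ}

theorem nthLargest_mem {i : ℕ} (h : i < #A) : A.nthLargest i ∈ A := by
  rw [nthLargest, dif_pos h]
  exact A.orderEmbOfFin_mem rfl _

theorem nthLargest_strictAntiOn : StrictAntiOn A.nthLargest (Set.Iio #A) := by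
  intro i (hi : i < #A) j (hj : j < #A) hij
  rw [nthLargest, nthLargest, dif_pos hi, dif_pos hj]
  exact (A.orderEmbOfFin rfl).strictMono (Fin.rev_lt_rev.mpr hij)

theorem image_nthLargest : (range #A).image A.nthLargest = A := by
  ext a
  simp only [mem_image, mem_range]
  refine ⟨fun ⟨i, hi, ha⟩ => ha ▸ nthLargest_mem hi, fun ha => ?_⟩
  obtain ⟨m, hm⟩ : a ∈ Set.range (A.orderEmbOfFin rfl) := by
    rwa [range_orderEmbOfFin]
  refine ⟨(Fin.rev m : ℕ), (Fin.rev m).isLt, ?_⟩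
  rw [nthLargest, dif_pos (Fin.rev m).isLt, Fin.eta, Fin.rev_rev, hm]

theorem nthLargest_eq_of_strictAntiOn {f : ℕ → ℕ} (hf : StrictAntiOn f (Set.Iio #A))
    (hfA : ∀ i < #A, f i ∈ A) {i : ℕ} (hi : i < #A) : A.nthLargest i = f i := by
  have hunique := A.orderEmbOfFin_unique rfl (f := fun m => f (Fin.rev m))
    (fun m => hfA _ (Fin.rev m).isLt)
    (fun m m' hmm' => hf (Fin.rev m').isLt (Fin.rev m).isLt (Fin.rev_lt_rev.mpr hmm'))
  rw [nthLargest, dif_pos hi, ← hunique]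
  simp

theorem antitoneOn_add_nthLargest : AntitoneOn (fun r => r + A.nthLargest r) (Set.Iio #A) :=
  antitoneOn_of_succ_le Set.ordConnected_Iio fun r _ hr hr' => by
    have := nthLargest_strictAntiOn hr hr' (Order.lt_succ_of_not_isMax (not_isMax r))
    simp only [Order.succ_eq_add_one] at this ⊢
    omega

end Finset

/-- The sets `diagSet lam` for `lam ∈ DS(t)`: adjacent elements would come from equal parts in
the Durfee square, and sums `t + 1`, `t + 2` from hooks of length `t`, `t + 1`. -/
def Admissible (t : ℕ) (A : Finset ℕ) : Prop :=
  ∀ a ∈ A, ∀ b ∈ A, a ∈ Icc 1 t ∧ a + 1 ≠ b ∧ a + b ≠ t + 1 ∧ a + b ≠ t + 2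

instance (t : ℕ) : DecidablePred (Admissible t) := fun _ => by
  unfold Admissible
  infer_instance

def admissibleSets (t : ℕ) : Finset (Finset ℕ) := (Icc 1 t).powerset.filter (Admissible t)

theorem mem_admissibleSets {t : ℕ} {A : Finset ℕ} :
    A ∈ admissibleSets t ↔ Admissible t A := by
  simp only [admissibleSets, mem_filter, mem_powerset]
  exact ⟨And.right, fun h => ⟨fun a ha => (h a ha a ha).1, h⟩⟩

namespace IntPartition

@[ext] theorem ext {lam mu : IntPartition} (h : ∀ i, lam.parts i = mu.parts i) : lam = mu := by
  cases lam; cases mu; simp only [mk.injEq]; exact funext h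

variable (lam : IntPartition)

theorem finite_setOf_lt_parts (f : ℕ → ℕ) : {i | f i < lam.parts i}.Finite := by
  obtain ⟨N, hN⟩ := lam.finite
  refine (Set.finite_Iio N).subset fun i (hi : f i < lam.parts i) => ?_
  by_contra h
  rw [hN i (not_lt.mp h)] at hi
  exact Nat.not_lt_zero _ hi

variable {lam}

theorem lt_conjParts_iff {i j : ℕ} : i < lam.conjParts j ↔ j < lam.parts i :=
  ((lam.finite_setOf_lt_parts fun _ => j).mem_iff_lt_natCard_of_isLowerSet
    fun a b hba (ha : j < lam.parts a) => ha.trans_le (lam.antitone b a hba)).symm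

theorem lt_durfee_iff {i : ℕ} : i < lam.durfee ↔ i < lam.parts i :=
  ((lam.finite_setOf_lt_parts fun i => i).mem_iff_lt_natCard_of_isLowerSet
    fun a b hba (ha : a < lam.parts a) => (hba.trans_lt ha).trans_le (lam.antitone b a hba)).symm

theorem parts_le_of_durfee_le {i : ℕ} (h : lam.durfee ≤ i) : lam.parts i ≤ i :=
  not_lt.mp fun hi => h.not_gt (lt_durfee_iff.mpr hi)

theorem durfee_le_parts {i : ℕ} (h : i < lam.durfee) : lam.durfee ≤ lam.parts i := by
  have := lt_durfee_iff.mp (Nat.sub_one_lt_of_lt h)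
  have := lam.antitone i (lam.durfee - 1) (by omega)
  omega

theorem conjParts_antitone : Antitone lam.conjParts := fun _ _ hjj' =>
  le_of_forall_lt fun _ hi =>
    lt_conjParts_iff.mpr (hjj'.trans_lt (lt_conjParts_iff.mp hi))

theorem IsCell.lt_durfee {i j : ℕ} (h : lam.IsCell i j) (hj : lam.durfee ≤ j) :
    i < lam.durfee := by
  by_contra! hi
  exact lt_irrefl _ (lt_durfee_iff.mpr ((hj.trans_lt h).trans_le (lam.antitone _ _ hi)))

theorem hook_add {i j : ℕ} (h : lam.IsCell i j) :
    lam.hook i j + i + j + 1 = lam.parts i + lam.conjParts j := by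
  have : i < lam.conjParts j := lt_conjParts_iff.mpr h
  unfold hook IsCell at *
  omega

theorem hook_add_le_hook {i j i' j' : ℕ} (hi : i ≤ i') (hj : j ≤ j') (h : lam.IsCell i' j') :
    lam.hook i' j' + (i' - i) + (j' - j) ≤ lam.hook i j := by
  have := hook_add h
  have := hook_add ((hj.trans_lt h).trans_le (lam.antitone i i' hi))
  have := lam.antitone i i' hi
  have := conjParts_antitone (lam := lam) hj
  omega

theorem hook_pos {i j : ℕ} (h : lam.IsCell i j) : 0 < lam.hook i j := by
  have : i < lam.conjParts j := lt_conjParts_iff.mpr h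
  unfold hook IsCell at *
  omega

theorem hook_zero_add_hook_ne {j r : ℕ} (hj : lam.IsCell 0 j) (hr : lam.IsCell r 0) :
    lam.hook 0 j + lam.hook r 0 ≠ lam.hook 0 0 := by
  have := hook_add hj
  have := hook_add hr
  have := hook_add (lt_of_le_of_lt (Nat.zero_le j) hj)
  -- `(r, j)` is a cell exactly when `r < conjParts j`; either way the hook sum is off by one
  rcases lt_or_ge j (lam.parts r) with hrj | hrj
  · have : r < lam.conjParts j := lt_conjParts_iff.mpr hrj
    omega
  · have : lam.conjParts j ≤ r := not_lt.mp (mt lt_conjParts_iff.mp (not_lt.mpr hrj))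
    omega

/-- A counting argument: the two images are disjoint, lie in `[1, hook 0 0]`, and have
`parts 0` and `conjParts 0 - 1` elements. -/
theorem image_hook_zero_union_eq_Icc (h₀ : lam.IsCell 0 0) :
    (range (lam.parts 0)).image (lam.hook 0) ∪
        (Ioo 0 (lam.conjParts 0)).image (lam.hook 0 0 - lam.hook · 0) =
      Icc 1 (lam.hook 0 0) := by
  have hcol : ∀ {r r' : ℕ}, r ≤ r' → r' < lam.conjParts 0 →
      lam.hook r' 0 + (r' - r) ≤ lam.hook r 0 := fun hrr' hr' => by
    simpa using hook_add_le_hook hrr' le_rfl (lt_conjParts_iff.mp hr')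
  have hdisj : Disjoint ((range (lam.parts 0)).image (lam.hook 0))
      ((Ioo 0 (lam.conjParts 0)).image (lam.hook 0 0 - lam.hook · 0)) := by
    refine disjoint_left.mpr fun y hy hy' => ?_
    obtain ⟨j, hj, rfl⟩ := mem_image.mp hy
    obtain ⟨r, hr, heq⟩ := mem_image.mp hy'
    have := hcol (Nat.zero_le r) (mem_Ioo.mp hr).2
    exact hook_zero_add_hook_ne (mem_range.mp hj) (lt_conjParts_iff.mp (mem_Ioo.mp hr).2)
      (by omega)
  refine eq_of_subset_of_card_le (fun y hy => mem_Icc.mpr ?_) ?_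
  · rcases mem_union.mp hy with hy | hy
    · obtain ⟨j, hj, rfl⟩ := mem_image.mp hy
      have := hook_add_le_hook le_rfl (Nat.zero_le j) (mem_range.mp hj)
      exact ⟨hook_pos (mem_range.mp hj), by omega⟩
    · obtain ⟨r, hr, rfl⟩ := mem_image.mp hy
      have := hcol (Nat.zero_le r) (mem_Ioo.mp hr).2
      have := (mem_Ioo.mp hr).1
      omega
  rw [card_union_of_disjoint hdisj, card_image_of_injOn, card_image_of_injOn, card_range,
    Nat.card_Ioo, Nat.card_Icc]
  · have := hook_add h₀
    omega
  · refine StrictMonoOn.injOn fun r hr r' hr' hrr' => ?_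
    have := hcol (Nat.zero_le r) (mem_Ioo.mp hr).2
    have := hcol hrr'.le (mem_Ioo.mp hr').2
    omega
  · refine StrictAntiOn.injOn fun j _ j' hj' hjj' => ?_
    have := hook_add_le_hook le_rfl hjj'.le (mem_range.mp hj')
    omega

theorem exists_hook_zero_eq_or_add_hook_eq (h₀ : lam.IsCell 0 0) {x : ℕ} (hx₀ : 0 < x)
    (hx : x ≤ lam.hook 0 0) :
    (∃ j, lam.IsCell 0 j ∧ lam.hook 0 j = x) ∨
      ∃ r, 0 < r ∧ lam.IsCell r 0 ∧ x + lam.hook r 0 = lam.hook 0 0 := by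
  have hx' : x ∈ Icc 1 (lam.hook 0 0) := mem_Icc.mpr ⟨hx₀, hx⟩
  rw [← image_hook_zero_union_eq_Icc h₀, mem_union, mem_image, mem_image] at hx'
  rcases hx' with ⟨j, hj, rfl⟩ | ⟨r, hr, rfl⟩
  · exact Or.inl ⟨j, mem_range.mp hj, rfl⟩
  · have hr0 : lam.IsCell r 0 := lt_conjParts_iff.mp (mem_Ioo.mp hr).2
    have := hook_add_le_hook (Nat.zero_le r) le_rfl hr0
    exact Or.inr ⟨r, (mem_Ioo.mp hr).1, hr0, by omega⟩

noncomputable def diagSet (lam : IntPartition) : Finset ℕ :=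
  (range lam.durfee).image fun i => lam.parts i - i

theorem diag_strictAntiOn : StrictAntiOn (fun i => lam.parts i - i) (Set.Iio lam.durfee) := by
  intro i _ j (hj : j < lam.durfee) hij
  have := lt_durfee_iff.mp hj
  have := lam.antitone i j hij.le
  dsimp only
  omega

theorem card_diagSet : #lam.diagSet = lam.durfee :=
  (card_image_of_injOn (by rw [coe_range]; exact diag_strictAntiOn.injOn)).trans (card_range _)

theorem nthLargest_diagSet {i : ℕ} (hi : i < lam.durfee) :
    lam.diagSet.nthLargest i = lam.parts i - i := by
  have hcard : #lam.diagSet = lam.durfee := card_diagSet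
  refine nthLargest_eq_of_strictAntiOn (f := fun k => lam.parts k - k)
    (hcard ▸ diag_strictAntiOn) (fun i hi => ?_) (hcard ▸ hi)
  exact mem_image_of_mem _ (mem_range.mpr (hcard ▸ hi))

theorem distinct_durfee_parts_iff :
    (∀ i j, i < lam.durfee → j < lam.durfee → i ≠ j → lam.parts i ≠ lam.parts j) ↔
      ∀ i < lam.durfee, ∀ j < lam.durfee, lam.parts i - i + 1 ≠ lam.parts j - j := by
  constructor
  · intro hdist i hi j hj heq
    have := lt_durfee_iff.mp hi
    have := lt_durfee_iff.mp hj
    rcases lt_or_ge i j with hij | hji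
    · have := lam.antitone i j hij.le
      omega
    · have := lam.antitone j i hji
      have hne : i ≠ j := by rintro rfl; omega
      exact hdist i j hi hj hne (by omega)
  · -- equal parts in two rows of the square force equal parts in two adjacent rows
    intro hsep
    suffices h : ∀ i j, i < j → j < lam.durfee → lam.parts i ≠ lam.parts j by
      intro i j hi hj hij
      rcases lt_or_gt_of_ne hij with hij | hji
      exacts [h i j hij hj, (h j i hji hi).symm]
    intro i j hij hj heq
    have : lam.parts (i + 1) ≤ lam.parts i := lam.antitone i (i + 1) (Nat.le_add_right i 1)
    have : lam.parts j ≤ lam.parts (i + 1) := lam.antitone (i + 1) j hij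
    have : i + 1 < lam.parts (i + 1) := lt_durfee_iff.mp (by omega)
    exact hsep (i + 1) (by omega) i (by omega) (by omega)

section SelfConjugate

variable (hlam : lam.IsSelfConjugate)
include hlam

theorem isCell_comm {i j : ℕ} : lam.IsCell i j ↔ lam.IsCell j i := by
  rw [IsCell, ← lt_conjParts_iff, hlam j, IsCell]

theorem hook_comm (i j : ℕ) : lam.hook i j = lam.hook j i := by
  simp only [hook, hlam i, hlam j]
  omega

theorem hook_add_of_isSelfConjugate {i j : ℕ} (h : lam.IsCell i j) :
    lam.hook i j + i + j + 1 = lam.parts i + lam.parts j :=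
  hlam j ▸ hook_add h

theorem hook_add_lt_of_durfee_le {i j : ℕ} (h : lam.IsCell i j) (hj : lam.durfee ≤ j) :
    lam.hook i j + i < lam.parts i := by
  have := hook_add_of_isSelfConjugate hlam h
  have := parts_le_of_durfee_le hj
  omega

theorem isCore_iff_of_isSelfConjugate {s : ℕ} (hs : lam.parts 0 ≤ s) :
    lam.IsCore s ↔
      ∀ i < lam.durfee, ∀ j < lam.durfee, lam.parts i - i + (lam.parts j - j) ≠ s + 1 := by
  constructor
  · intro hcore i hi j hj hsum
    have hcell : lam.IsCell i j := hj.trans_le (durfee_le_parts hi)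
    have := hook_add_of_isSelfConjugate hlam hcell
    have := lt_durfee_iff.mp hi
    have := lt_durfee_iff.mp hj
    exact hcore i j hcell ⟨1, by omega⟩
  · intro hsum i j hcell hdvd
    have hpos := hook_pos hcell
    have hle := hook_add_le_hook (Nat.zero_le i) (Nat.zero_le j) hcell
    have h00 := hook_add_of_isSelfConjugate hlam (lt_of_le_of_lt (Nat.zero_le j)
      (hcell.trans_le (lam.antitone 0 i (Nat.zero_le i))))
    have hhook : lam.hook i j = s := Nat.eq_of_dvd_of_lt_two_mul hpos.ne' hdvd (by omega)
    rcases lt_or_ge j lam.durfee with hj | hj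
    · rcases lt_or_ge i lam.durfee with hi | hi
      · have := hook_add_of_isSelfConjugate hlam hcell
        have := lt_durfee_iff.mp hi
        have := lt_durfee_iff.mp hj
        exact hsum i hi j hj (by omega)
      · have := hook_comm hlam i j
        have := hook_add_lt_of_durfee_le hlam ((isCell_comm hlam).mp hcell) hi
        have := lam.antitone 0 j (Nat.zero_le j)
        omega
    · have := hook_add_lt_of_durfee_le hlam hcell hj
      have := lam.antitone 0 i (Nat.zero_le i)
      omega

theorem eq_of_diagSet_eq {mu : IntPartition} (hmu : mu.IsSelfConjugate)
    (h : lam.diagSet = mu.diagSet) : lam = mu := by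
  have hd : lam.durfee = mu.durfee := by rw [← card_diagSet, h, card_diagSet]
  have hsq : ∀ i < lam.durfee, lam.parts i = mu.parts i := fun i hi => by
    have := nthLargest_diagSet hi
    have := nthLargest_diagSet (hd ▸ hi)
    have := lt_durfee_iff.mp hi
    have := lt_durfee_iff.mp (hd ▸ hi)
    rw [h] at *
    omega
  -- beyond the Durfee square, the rows are the columns of the square
  ext i
  by_cases hi : i < lam.durfee
  · exact hsq i hi
  have hcol : {r | i < lam.parts r} = {r | i < mu.parts r} := by
    ext r
    refine ⟨fun hr => ?_, fun hr => ?_⟩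
    · change i < mu.parts r
      rwa [← hsq r (IsCell.lt_durfee hr (not_lt.mp hi))]
    · change i < lam.parts r
      rwa [hsq r (hd ▸ IsCell.lt_durfee hr (hd ▸ not_lt.mp hi))]
  rw [← hlam i, ← hmu i, conjParts, conjParts, hcol]

/-- If `parts 0 > t`, then neither `t` nor `t + 1` is a first-row hook, so both are
`hook 0 0 - hook r 0` for first-column hooks; these come from two adjacent rows of equal
length, which contradicts either distinctness or self-conjugacy. -/
theorem parts_zero_le_of_isCore {t : ℕ} (hcore : lam.IsCore t) (hcore' : lam.IsCore (t + 1))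
    (hdist : ∀ i j, i < lam.durfee → j < lam.durfee → i ≠ j → lam.parts i ≠ lam.parts j) :
    lam.parts 0 ≤ t := by
  by_contra! ht
  have h₀ : lam.IsCell 0 0 := by unfold IsCell; omega
  have h00 := hook_add_of_isSelfConjugate hlam h₀
  obtain rfl | ht₀ := Nat.eq_zero_or_pos t
  · exact hcore' 0 0 h₀ (one_dvd _)
  have hcol : ∀ x, lam.IsCore x → 0 < x → x ≤ lam.hook 0 0 →
      ∃ r, 0 < r ∧ lam.IsCell r 0 ∧ x + lam.hook r 0 = lam.hook 0 0 := fun x hx hx₀ hxle =>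
    (exists_hook_zero_eq_or_add_hook_eq h₀ hx₀ hxle).resolve_left
      fun ⟨j, hj, hjx⟩ => hx 0 j hj (hjx ▸ dvd_rfl)
  obtain ⟨r, hr, hrc, hrt⟩ := hcol t hcore ht₀ (by omega)
  obtain ⟨r', hr', hrc', hrt'⟩ := hcol (t + 1) hcore' (by omega) (by omega)
  have := hook_add_of_isSelfConjugate hlam hrc
  have := hook_add_of_isSelfConjugate hlam hrc'
  have hrr' : r < r' := by
    by_contra! h
    have := lam.antitone _ _ h
    omega
  have := lam.antitone _ _ hrr'.le
  obtain rfl : r' = r + 1 := by omega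
  have : lam.parts (r + 1) ≤ lam.parts r := lam.antitone _ _ (Nat.le_add_right r 1)
  rcases lt_or_ge (r + 1) (lam.parts (r + 1)) with hsq | hsq
  · exact hdist r (r + 1) (lt_durfee_iff.mpr (by omega)) (lt_durfee_iff.mpr hsq) (by omega)
      (by omega)
  · have : r + 1 < lam.conjParts r := lt_conjParts_iff.mpr (by omega)
    rw [hlam r] at this
    omega

end SelfConjugate

/-- The diagram whose rows `i < #A` have length `i + A.nthLargest i`, closed under
transposition; it is the self-conjugate partition with `diagSet = A`. -/
def FrobeniusCell (A : Finset ℕ) (i j : ℕ) : Prop :=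
  (i < #A ∧ j < i + A.nthLargest i) ∨ (j < #A ∧ i < j + A.nthLargest j)

section OfDiagSet

variable {A : Finset ℕ}

theorem frobeniusCell_comm {i j : ℕ} : FrobeniusCell A i j ↔ FrobeniusCell A j i := Or.comm

theorem FrobeniusCell.of_le_right {i j j' : ℕ} (h : FrobeniusCell A i j) (hj : j' ≤ j) :
    FrobeniusCell A i j' := by
  rcases h with ⟨hi, h⟩ | ⟨hj', h⟩
  · exact Or.inl ⟨hi, by omega⟩
  · exact Or.inr ⟨by omega, h.trans_le (antitoneOn_add_nthLargest (hj.trans_lt hj') hj' hj)⟩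

theorem lt_card_frobeniusCell_iff {i j : ℕ} :
    j < Nat.card {j | FrobeniusCell A i j} ↔ FrobeniusCell A i j := by
  refine (Set.Finite.mem_iff_lt_natCard_of_isLowerSet ?_
    fun a b hba ha => ha.of_le_right hba).symm
  refine (Set.finite_Iio (i + A.nthLargest i + #A)).subset fun j hj => ?_
  rcases hj with ⟨_, h⟩ | ⟨h, _⟩ <;> simp only [Set.mem_Iio] <;> omega

noncomputable def ofDiagSet (A : Finset ℕ) : IntPartition where
  parts i := Nat.card {j | FrobeniusCell A i j}
  antitone i i' hii' := le_of_forall_lt fun j hj => lt_card_frobeniusCell_iff.mpr <|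
    frobeniusCell_comm.mpr <|
      (frobeniusCell_comm.mp (lt_card_frobeniusCell_iff.mp hj)).of_le_right hii'
  finite := ⟨#A + A.nthLargest 0, fun i hi => Nat.eq_zero_of_not_pos fun h => by
    rcases lt_card_frobeniusCell_iff.mp h with ⟨h, _⟩ | ⟨_, h⟩ <;> omega⟩

theorem isSelfConjugate_ofDiagSet : (ofDiagSet A).IsSelfConjugate := fun j => by
  have : {i | j < (ofDiagSet A).parts i} = {i | FrobeniusCell A j i} :=
    Set.ext fun _ => lt_card_frobeniusCell_iff.trans frobeniusCell_comm
  rw [conjParts, this]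
  rfl

variable (hA : ∀ a ∈ A, 0 < a)
include hA

theorem parts_ofDiagSet {i : ℕ} (hi : i < #A) : (ofDiagSet A).parts i = i + A.nthLargest i := by
  have := hA _ (nthLargest_mem hi)
  refine eq_of_forall_lt_iff fun j => lt_card_frobeniusCell_iff.trans
    ⟨fun h => h.elim And.right fun ⟨hj, h⟩ => ?_, fun h => Or.inl ⟨hi, h⟩⟩
  rcases le_total j i with hji | hij
  · omega
  · have := hA _ (nthLargest_mem hj)
    have := antitoneOn_add_nthLargest hi hj hij
    dsimp only at this
    omega

theorem durfee_ofDiagSet : (ofDiagSet A).durfee = #A :=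
  eq_of_forall_lt_iff fun i => lt_durfee_iff.trans <| lt_card_frobeniusCell_iff.trans
    ⟨fun h => h.elim And.left And.left, fun hi => Or.inl ⟨hi, by
      have := hA _ (nthLargest_mem hi)
      omega⟩⟩

theorem diagSet_ofDiagSet : (ofDiagSet A).diagSet = A := by
  rw [diagSet, durfee_ofDiagSet hA]
  conv_rhs => rw [← image_nthLargest (A := A)]
  refine image_congr fun i hi => ?_
  simp only [parts_ofDiagSet hA (mem_range.mp hi), add_tsub_cancel_left]

end OfDiagSet

theorem inDS_iff {t : ℕ} : lam.InDS t ↔ lam.IsSelfConjugate ∧ Admissible t lam.diagSet := by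
  simp only [Admissible, diagSet, forall_mem_image, mem_range, mem_Icc]
  constructor
  · rintro ⟨hlam, hcore, hcore', hdist⟩
    have h0 := parts_zero_le_of_isCore hlam hcore hcore' hdist
    have hsep := distinct_durfee_parts_iff.mp hdist
    have hsum := (isCore_iff_of_isSelfConjugate hlam h0).mp hcore
    have hsum' := (isCore_iff_of_isSelfConjugate hlam (h0.trans t.le_succ)).mp hcore'
    refine ⟨hlam, fun i hi j hj => ⟨⟨?_, ?_⟩, hsep i hi j hj, hsum i hi j hj, hsum' i hi j hj⟩⟩
    · have := lt_durfee_iff.mp hi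
      omega
    · have := lam.antitone 0 i (Nat.zero_le i)
      omega
  · rintro ⟨hlam, hadm⟩
    have h0 : lam.parts 0 ≤ t := by
      rcases Nat.eq_zero_or_pos lam.durfee with hd | hd
      · exact (parts_le_of_durfee_le hd.le).trans (Nat.zero_le t)
      · simpa using (hadm hd hd).1.2
    exact ⟨hlam,
      (isCore_iff_of_isSelfConjugate hlam h0).mpr fun i hi j hj => (hadm hi hj).2.2.1,
      (isCore_iff_of_isSelfConjugate hlam (h0.trans t.le_succ)).mpr
        fun i hi j hj => (hadm hi hj).2.2.2,
      distinct_durfee_parts_iff.mpr fun i hi j hj => (hadm hi hj).2.1⟩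

end IntPartition

open IntPartition in
theorem fDS_eq_card_admissibleSets (t : ℕ) : fDS t = #(admissibleSets t) := by
  let diag : {lam : IntPartition // lam.InDS t} → {A // A ∈ admissibleSets t} :=
    fun lam => ⟨lam.1.diagSet, mem_admissibleSets.mpr (inDS_iff.mp lam.2).2⟩
  have hdiag : Function.Bijective diag := by
    refine ⟨fun lam mu h => Subtype.ext (eq_of_diagSet_eq (inDS_iff.mp lam.2).1
      (inDS_iff.mp mu.2).1 (congrArg Subtype.val h)), fun ⟨A, hA⟩ => ?_⟩
    have hadm := mem_admissibleSets.mp hA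
    have hpos : ∀ a ∈ A, 0 < a := fun a ha => (mem_Icc.mp (hadm a ha a ha).1).1
    refine ⟨⟨ofDiagSet A, inDS_iff.mpr ⟨isSelfConjugate_ofDiagSet, ?_⟩⟩,
      Subtype.ext (diagSet_ofDiagSet hpos)⟩
    rwa [diagSet_ofDiagSet hpos]
  rw [fDS, Nat.card_eq_of_bijective diag hdiag, Nat.card_eq_fintype_card, Fintype.card_coe]

theorem Finset.image_tsub_image_tsub {c : ℕ} {A : Finset ℕ} (hA : ∀ a ∈ A, a ≤ c) :
    (A.image (c - ·)).image (c - ·) = A := by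
  rw [image_image]
  conv_rhs => rw [← image_id (s := A)]
  refine image_congr fun a ha => ?_
  have := hA a ha
  simp only [Function.comp_apply, id]
  omega

theorem Admissible.le {t : ℕ} {A : Finset ℕ} (hA : Admissible t A) : ∀ a ∈ A, a ≤ t :=
  fun a ha => (mem_Icc.mp (hA a ha a ha).1).2

/-- Without `1`, the reflection `a ↦ t + 1 - a` turns the forbidden sums `t + 1`, `t + 2`
into `t + 1`, `t`. -/
theorem card_filter_one_notMem_admissibleSets (m : ℕ) :
    #{A ∈ admissibleSets (m + 3) | 1 ∉ A} = #(admissibleSets (m + 2)) := by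
  refine card_nbij' (image (m + 4 - ·)) (image (m + 4 - ·)) (fun A hA => ?_) (fun B hB => ?_)
    (fun A hA => image_tsub_image_tsub fun a ha => ?_)
    (fun B hB => image_tsub_image_tsub fun b hb => ?_)
  · obtain ⟨hA, h1⟩ := mem_filter.mp hA
    simp only [mem_coe, mem_admissibleSets, Admissible, forall_mem_image, mem_Icc] at hA ⊢
    intro a ha b hb
    have : a ≠ 1 := fun h => h1 (h ▸ ha)
    have := hA a ha b hb
    have := hA b hb a ha
    omega
  · simp only [mem_coe, mem_admissibleSets, Admissible, mem_Icc] at hB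
    rw [mem_coe, mem_filter, mem_admissibleSets]
    refine ⟨?_, fun h => ?_⟩
    · simp only [Admissible, forall_mem_image, mem_Icc]
      intro a ha b hb
      have := hB a ha b hb
      have := hB b hb a ha
      omega
    · obtain ⟨b, hb, hb1⟩ := mem_image.mp h
      have := hB b hb b hb
      omega
  · have := (mem_admissibleSets.mp (mem_filter.mp hA).1).le a ha
    omega
  · have := (mem_admissibleSets.mp hB).le b hb
    omega

/-- With `1 ∈ A`, the other elements lie in `[3, t - 1]` and `a ↦ t - a` maps them onto an
admissible set for `t - 3`. -/
theorem card_filter_one_mem_admissibleSets (m : ℕ) :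
    #{A ∈ admissibleSets (m + 3) | 1 ∈ A} = #(admissibleSets m) := by
  refine card_nbij' (fun A => (A.erase 1).image (m + 3 - ·))
    (fun B => insert 1 (B.image (m + 3 - ·))) (fun A hA => ?_) (fun B hB => ?_)
    (fun A hA => ?_) (fun B hB => ?_)
  · obtain ⟨hA, h1⟩ := mem_filter.mp hA
    simp only [mem_coe, mem_admissibleSets, Admissible, forall_mem_image, mem_Icc,
      mem_erase] at hA ⊢
    intro a ⟨ha1, ha⟩ b ⟨hb1, hb⟩
    have := hA 1 h1 a ha
    have := hA 1 h1 b hb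
    have := hA a ha b hb
    have := hA b hb a ha
    omega
  · simp only [mem_coe, mem_admissibleSets, Admissible, mem_Icc] at hB
    rw [mem_coe, mem_filter, mem_admissibleSets]
    refine ⟨?_, mem_insert_self 1 _⟩
    simp only [Admissible, forall_mem_insert, forall_mem_image, mem_Icc]
    refine ⟨⟨by omega, fun b hb => ?_⟩, fun a ha => ⟨?_, fun b hb => ?_⟩⟩
    · have := hB b hb b hb
      omega
    · have := hB a ha a ha
      omega
    · have := hB a ha b hb
      have := hB b hb a ha
      omega
  · obtain ⟨hA, h1⟩ := mem_filter.mp hA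
    have hle := (mem_admissibleSets.mp hA).le
    dsimp only
    rw [image_tsub_image_tsub fun a ha => ?_, insert_erase h1]
    have := hle a (mem_of_mem_erase ha)
    omega
  · have hle := (mem_admissibleSets.mp hB).le
    have h1 : 1 ∉ B.image (m + 3 - ·) := fun h => by
      obtain ⟨b, hb, hb1⟩ := mem_image.mp h
      have := hle b hb
      omega
    dsimp only
    rw [erase_insert h1, image_tsub_image_tsub fun b hb => ?_]
    have := hle b hb
    omega

theorem card_admissibleSets_add_three (m : ℕ) :
    #(admissibleSets (m + 3)) = #(admissibleSets (m + 2)) + #(admissibleSets m) := by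
  rw [← card_filter_one_notMem_admissibleSets m, ← card_filter_one_mem_admissibleSets m]
  have := card_filter_add_card_filter_not (s := admissibleSets (m + 3)) (1 ∈ ·)
  omega

theorem PowerSeries.mk_mul_one_sub_X_sub_X_pow_three {R : Type*} [CommRing R] {a : ℕ → R}
    (h0 : a 0 = 1) (h1 : a 1 = 1) (h2 : a 2 = 1) (h : ∀ n, a (n + 3) = a (n + 2) + a n) :
    mk a * (1 - X - X ^ 3) = 1 := by
  ext n
  rw [show mk a * (1 - X - X ^ 3) = mk a - mk a * X ^ 1 - mk a * X ^ 3 by ring, map_sub, map_sub,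
    coeff_mul_X_pow', coeff_mul_X_pow', coeff_mk, coeff_one]
  rcases n with _ | _ | _ | n <;> simp [h0, h1, h2, h]

/-- Generating function: `∑_{t ≥ 0} f(t-1) x^t = 1 / (1 - x - x^3)`, where
`f(-1) = 1`. -/
theorem fDS_generating_function :
    (PowerSeries.mk fun t : ℕ => if t = 0 then (1 : ℚ) else (fDS (t - 1) : ℚ)) *
        (1 - PowerSeries.X - PowerSeries.X ^ 3) = 1 := by
  have h0 : #(admissibleSets 0) = 1 := by decide
  have h1 : #(admissibleSets 1) = 1 := by decide
  have h2 : #(admissibleSets 2) = 2 := by decide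
  simp_rw [fDS_eq_card_admissibleSets]
  refine PowerSeries.mk_mul_one_sub_X_sub_X_pow_three rfl (by simp [h0]) (by simp [h1])
    fun n => ?_
  rcases n with _ | n
  · norm_num [h1, h2]
  · simp [card_admissibleSets_add_three]
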